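/- Let C = {α ∈ ℝ^n : ‖α − w₀‖ ≤ R} with R > 0, let θ̂ ∈ C, η > 0, g ∈ ℝ^n with ‖g‖ ≤ G, and define the gradient mapping ρ = (Π_C(θ̂ + η·g) − θ̂)/η. Then for every θ ∈ C, g·(θ − θ̂) ≤ (2R + η·G)·‖ρ‖. -/
import Mathlib


set_option maxHeartbeats 1000000

open RealInnerProductSpace

/-- stationarity gap bounded by the norm of the gradient mapping
on a ball. -/
theorem gradient_mapping_bounds_stationarity_gap
    (n : ℕ) (w₀ : EuclideanSpace ℝ (Fin n)) (R : ℝ) (hR : 0 < R)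
    (C : Set (EuclideanSpace ℝ (Fin n)))
    (hC : C = Metric.closedBall w₀ R)
    (proj : EuclideanSpace ℝ (Fin n) → EuclideanSpace ℝ (Fin n))
    (hproj_mem : ∀ y, proj y ∈ C)
    (hproj : ∀ y, ∀ x ∈ C, dist y (proj y) ≤ dist y x)
    (θhat : EuclideanSpace ℝ (Fin n)) (hθhat : θhat ∈ C)
    (η : ℝ) (hη : 0 < η)
    (g : EuclideanSpace ℝ (Fin n)) (G : ℝ) (hG : ‖g‖ ≤ G)
    (ρ : EuclideanSpace ℝ (Fin n))
    (hρ : ρ = η⁻¹ • (proj (θhat + η • g) - θhat)) :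
    ∀ θ ∈ C, ⟪g, θ - θhat⟫ ≤ (2 * R + η * G) * ‖ρ‖ := by
  intro θ hθ
  set y := θhat + η • g with hy
  set p := proj y with hp
  have hpC : p ∈ C := hproj_mem y
  have hconv : Convex ℝ C := by rw [hC]; exact convex_closedBall _ _
  haveI : Nonempty C := ⟨⟨p, hpC⟩⟩
  have hbdd : BddBelow (Set.range fun w : C => ‖y - (w : EuclideanSpace ℝ (Fin n))‖) := by
    refine ⟨0, ?_⟩; rintro r ⟨w, rfl⟩; exact norm_nonneg _
  have hle : ‖y - p‖ ≤ ⨅ w : C, ‖y - (w : EuclideanSpace ℝ (Fin n))‖ := by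
    refine le_ciInf fun w => ?_
    simpa [dist_eq_norm] using hproj y w w.2
  have hge : (⨅ w : C, ‖y - (w : EuclideanSpace ℝ (Fin n))‖) ≤ ‖y - p‖ :=
    ciInf_le hbdd ⟨p, hpC⟩
  have hinf : ‖y - p‖ = ⨅ w : C, ‖y - (w : EuclideanSpace ℝ (Fin n))‖ :=
    le_antisymm hle hge
  have hVI : ∀ x ∈ C, ⟪y - p, x - p⟫ ≤ 0 :=
    (norm_eq_iInf_iff_real_inner_le_zero hconv hpC).mp hinf
  have hρη : p - θhat = η • ρ := by
    rw [hρ, smul_smul, mul_inv_cancel₀ hη.ne', one_smul]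
  have hg : g = η⁻¹ • (y - p) + ρ := by
    rw [hρ, ← smul_add, sub_add_sub_cancel, hy, add_sub_cancel_left, smul_smul,
      inv_mul_cancel₀ hη.ne', one_smul]
  have hyp : ‖y - p‖ ≤ η * G := by
    have h1 := hproj y θhat hθhat
    rw [dist_eq_norm, dist_eq_norm] at h1
    have h2 : ‖y - θhat‖ = η * ‖g‖ := by
      rw [hy, add_sub_cancel_left, norm_smul, Real.norm_eq_abs, abs_of_pos hη]
    calc ‖y - p‖ ≤ ‖y - θhat‖ := h1
      _ = η * ‖g‖ := h2
      _ ≤ η * G := by nlinarith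
  have hθθ : ‖θ - θhat‖ ≤ 2 * R := by
    rw [hC] at hθ hθhat
    have := dist_triangle θ w₀ θhat
    rw [Metric.mem_closedBall] at hθ hθhat
    rw [dist_comm w₀ θhat] at this
    rw [← dist_eq_norm]
    linarith
  have split : ⟪y - p, θ - θhat⟫ = ⟪y - p, θ - p⟫ + η * ⟪y - p, ρ⟫ := by
    rw [← real_inner_smul_right, ← inner_add_right, ← hρη, sub_add_sub_cancel]
  have key : ⟪g, θ - θhat⟫ = η⁻¹ * ⟪y - p, θ - p⟫ + ⟪y - p, ρ⟫ + ⟪ρ, θ - θhat⟫ := by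
    rw [hg, inner_add_left, real_inner_smul_left, split]
    field_simp
  have h1 : η⁻¹ * ⟪y - p, θ - p⟫ ≤ 0 :=
    mul_nonpos_of_nonneg_of_nonpos (inv_pos.mpr hη).le (hVI θ hθ)
  have h2 : ⟪y - p, ρ⟫ ≤ (η * G) * ‖ρ‖ :=
    (real_inner_le_norm _ _).trans (mul_le_mul_of_nonneg_right hyp (norm_nonneg _))
  have h3 : ⟪ρ, θ - θhat⟫ ≤ ‖ρ‖ * (2 * R) :=
    (real_inner_le_norm _ _).trans (mul_le_mul_of_nonneg_left hθθ (norm_nonneg _))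
  rw [key]
  nlinarith [norm_nonneg ρ]
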